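/- arXiv:2306.04737 — 5 statements merged into one kernel-verified Lean document; each statement's English description precedes it below -/
import Mathlib

section
/- Let γ be a nonempty string and let α, β be finite strings with α ≺ β ≺ γ^ω in co-lex order, where γ^ω is the left-infinite string ...γγγ. Then for any integer l with l·|γ| > max(|α|, |β|) and every d ≥ 0, the following strict inequalities hold in co-lex order: α·(γ^l)^d ≺ β·(γ^l)^d ≺ α·(γ^l)^{d+1} ≺ β·(γ^l)^{d+1}. -/
/-- Co-lexicographic order on finite strings: compare last characters first. -/
def ColexStr {α : Type*} [LinearOrder α] (a b : List α) : Prop :=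
  List.Lex (· < ·) a.reverse b.reverse

/-- `a ≺ f` where `f : ℕ → α` is a left-infinite ω-string indexed from the last
character: either `a` matches `f` until `a` is exhausted (`ε ≺` any ω-string),
or at the first differing position from the right, `a`'s character is smaller. -/
def ColexOmega {α : Type*} [LinearOrder α] (a : List α) (f : ℕ → α) : Prop :=
  (∀ j < a.length, a.reverse[j]? = some (f j)) ∨
  ∃ i < a.length, (∀ j < i, a.reverse[j]? = some (f j)) ∧
    ∃ c, a.reverse[i]? = some c ∧ c < f i

/-- `d`-fold concatenation `γ^d` of a string `γ`. -/
def powStr {A : Type*} (γ : List A) (d : ℕ) : List A :=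
  (List.replicate d γ).flatten

lemma lex_append_left {A : Type*} [LinearOrder A] {a b : List A} (c : List A)
    (h : List.Lex (· < ·) a b) : List.Lex (· < ·) (c ++ a) (c ++ b) := by
  induction c with
  | nil => simpa
  | cons x c ih => exact List.Lex.cons ih

lemma lex_of_lt_at {A : Type*} [LinearOrder A] :
    ∀ (i : ℕ) (a b : List A), (∀ j < i, a[j]? = b[j]?) →
    ∀ c c', a[i]? = some c → b[i]? = some c' → c < c' → List.Lex (· < ·) a b
  | 0, a, b, _, c, c', ha, hb, hcc => by
    cases a with
    | nil => simp at ha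
    | cons x a =>
      cases b with
      | nil => simp at hb
      | cons y b =>
        simp only [List.getElem?_cons_zero, Option.some.injEq] at ha hb
        subst ha; subst hb
        exact List.Lex.rel hcc
  | (i+1), a, b, h, c, c', ha, hb, hcc => by
    cases a with
    | nil => simp at ha
    | cons x a =>
      cases b with
      | nil => simp at hb
      | cons y b =>
        have h0 := h 0 (Nat.succ_pos _)
        simp only [List.getElem?_cons_zero, Option.some.injEq] at h0
        subst h0
        refine List.Lex.cons ?_
        exact lex_of_lt_at i a b (fun j hj => by
          have := h (j+1) (by omega)
          simpa using this) c c' (by simpa using ha) (by simpa using hb) hcc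

lemma lex_of_prefix {A : Type*} [LinearOrder A] :
    ∀ (a b : List A), a.length < b.length → (∀ j < a.length, a[j]? = b[j]?) →
    List.Lex (· < ·) a b
  | [], b, hlen, _ => by
    cases b with
    | nil => simp at hlen
    | cons y b => exact List.Lex.nil
  | (x :: a), b, hlen, h => by
    cases b with
    | nil => simp at hlen
    | cons y b =>
      have h0 := h 0 (Nat.succ_pos _)
      simp only [List.getElem?_cons_zero, Option.some.injEq] at h0
      subst h0
      refine List.Lex.cons ?_
      exact lex_of_prefix a b (by simpa using hlen) (fun j hj => by
        have := h (j+1) (by simpa using hj)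
        simpa using this)

lemma powStr_length {A : Type*} (γ : List A) (l : ℕ) :
    (powStr γ l).length = l * γ.length := by
  simp [powStr, List.length_flatten, List.map_replicate, Nat.mul_comm]

lemma powStr_succ {A : Type*} (γ : List A) (l : ℕ) :
    powStr γ (l + 1) = γ ++ powStr γ l := by
  simp [powStr, List.replicate_succ]

lemma powStr_rev_get {A : Type*} (γ : List A) :
    ∀ (l j : ℕ), j < l * γ.length →
      (powStr γ l).reverse[j]? = γ.reverse[j % γ.length]?
  | 0, j, hj => by omega
  | (l+1), j, hj => by
    rw [Nat.succ_mul] at hj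
    rw [powStr_succ, List.reverse_append]
    have hlen : (powStr γ l).reverse.length = l * γ.length := by
      simp [powStr_length]
    by_cases hcase : j < l * γ.length
    · rw [List.getElem?_append_left (by omega)]
      exact powStr_rev_get γ l j hcase
    · have hγpos : 0 < γ.length := by
        rcases Nat.eq_zero_or_pos γ.length with h0 | h0
        · omega
        · exact h0
      have hle : l * γ.length ≤ j := by omega
      rw [List.getElem?_append_right (by omega), hlen]
      have hj2 : j - l * γ.length < γ.length := by
        have : j < l * γ.length + γ.length := by
          omega
        omega
      obtain ⟨r, rfl⟩ : ∃ r, j = l * γ.length + r := ⟨j - l * γ.length, by omega⟩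
      have : (l * γ.length + r) % γ.length = r := by
        rw [Nat.add_comm, Nat.add_mul_mod_self_right]
        exact Nat.mod_eq_of_lt (by omega)
      rw [this]
      congr 1
      omega

/-- If `α ≺ β ≺ γ^ω` in co-lex order, then for any `l` with `l·|γ| > max(|α|,|β|)`
and any `d ≥ 0`:  `α·(γ^l)^d ≺ β·(γ^l)^d ≺ α·(γ^l)^{d+1} ≺ β·(γ^l)^{d+1}`. -/
theorem colex_pump_chain {A : Type*} [Fintype A] [LinearOrder A]
    (γ α β : List A) (f : ℕ → A) (hγ : γ ≠ [])
    (hf : ∀ i, γ.reverse[i % γ.length]? = some (f i))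
    (hαβ : ColexStr α β) (hβω : ColexOmega β f)
    (l d : ℕ) (hl : max α.length β.length < l * γ.length) :
    ColexStr (α ++ powStr (powStr γ l) d) (β ++ powStr (powStr γ l) d) ∧
    ColexStr (β ++ powStr (powStr γ l) d) (α ++ powStr (powStr γ l) (d + 1)) ∧
    ColexStr (α ++ powStr (powStr γ l) (d + 1)) (β ++ powStr (powStr γ l) (d + 1)) := by
  set t := powStr γ l with ht
  have htlen : t.length = l * γ.length := powStr_length γ l
  have kt : ∀ j < t.length, t.reverse[j]? = some (f j) := by
    intro j hj
    rw [ht, powStr_rev_get γ l j (by omega)]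
    exact hf j
  have hβlen : β.length < t.length := by
    rw [htlen]; exact lt_of_le_of_lt (le_max_right _ _) hl
  -- core: Colex β (α ++ t)
  have core : ColexStr β (α ++ t) := by
    unfold ColexStr
    rw [List.reverse_append]
    rcases hβω with h | ⟨i, hi, hpre, c, hc, hlt⟩
    · apply lex_of_prefix
      · simp only [List.length_reverse, List.length_append]
        omega
      · intro j hj
        simp only [List.length_reverse] at hj
        rw [List.getElem?_append_left (by simp; omega)]
        rw [h j hj, kt j (by omega)]
    · apply lex_of_lt_at i _ _ ?_ c (f i) hc ?_ hlt
      · intro j hj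
        rw [hpre j hj, List.getElem?_append_left (by simp; omega)]
        rw [kt j (by omega)]
      · rw [List.getElem?_append_left (by simp; omega)]
        exact kt i (by omega)
  have key2 : ColexStr (β ++ powStr t d) (α ++ powStr t (d + 1)) := by
    unfold ColexStr
    rw [powStr_succ, show α ++ (t ++ powStr t d) = (α ++ t) ++ powStr t d by
      simp [List.append_assoc]]
    rw [List.reverse_append, List.reverse_append]
    exact lex_append_left _ core
  refine ⟨?_, key2, ?_⟩
  · unfold ColexStr
    rw [List.reverse_append, List.reverse_append]
    exact lex_append_left _ hαβ
  · unfold ColexStr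
    rw [List.reverse_append, List.reverse_append]
    exact lex_append_left _ hαβ
end

section
/- Turán-type bound for closed interval graphs: if S is a multiset of n closed intervals over the integers such that no p+1 of them are pairwise intersecting (p ≥ 1), then the number of unordered pairs of distinct indices whose intervals intersect is at most n(p−1). -/
/-!
Order the intervals by left endpoint, ties broken by index. An interval `v` together with the
earlier intervals meeting it all contain the point `x v`, so they pairwise intersect and there
are at most `p - 1` of the latter. Every intersecting pair is counted at its later interval,
which gives at most `n (p - 1)` pairs.
-/

open Finset

namespace IntervalGraph

variable {ι α : Type*} [LinearOrder ι] [Fintype ι] [LinearOrder α] (x y : ι → α)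

def leftNeighbors (v : ι) : Finset ι :=
  univ.filter fun u => toLex (x u, u) < toLex (x v, v) ∧ x u ≤ y v ∧ x v ≤ y u

variable {x y}

theorem mem_leftNeighbors {u v : ι} :
    u ∈ leftNeighbors x y v ↔ toLex (x u, u) < toLex (x v, v) ∧ x u ≤ y v ∧ x v ≤ y u := by
  simp [leftNeighbors]

theorem left_le_of_mem_leftNeighbors {u v : ι} (hu : u ∈ leftNeighbors x y v) : x u ≤ x v :=
  (Prod.Lex.monotone_fst _ _ (mem_leftNeighbors.1 hu).1.le :)

theorem card_leftNeighbors_le {p : ℕ} (hxy : ∀ i, x i ≤ y i)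
    (h : ∀ T : Finset ι, (∀ i ∈ T, ∀ j ∈ T, x i ≤ y j ∧ x j ≤ y i) → T.card ≤ p) (v : ι) :
    #(leftNeighbors x y v) ≤ p - 1 := by
  have hcontain : ∀ i ∈ insert v (leftNeighbors x y v), x i ≤ x v ∧ x v ≤ y i := by
    intro i hi
    rcases mem_insert.1 hi with rfl | hi
    · exact ⟨le_rfl, hxy i⟩
    · exact ⟨left_le_of_mem_leftNeighbors hi, (mem_leftNeighbors.1 hi).2.2⟩
  have hclique := h _ fun i hi j hj =>
    ⟨(hcontain i hi).1.trans (hcontain j hj).2, (hcontain j hj).1.trans (hcontain i hi).2⟩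
  have hv : v ∉ leftNeighbors x y v := fun hv => (mem_leftNeighbors.1 hv).1.false
  rw [card_insert_of_notMem hv] at hclique
  omega

theorem meetingPairs_subset_biUnion_leftNeighbors :
    univ.filter (fun q : ι × ι => q.1 < q.2 ∧ x q.1 ≤ y q.2 ∧ x q.2 ≤ y q.1) ⊆
      univ.biUnion fun v => (leftNeighbors x y v).image fun u => (min u v, max u v) := by
  rintro ⟨a, b⟩ hq
  obtain ⟨hab, hxa, hxb⟩ := by simpa using hq
  simp only [mem_biUnion, mem_univ, true_and, mem_image, mem_leftNeighbors]
  rcases lt_or_gt_of_ne (a := toLex (x a, a)) (b := toLex (x b, b)) (by simp [hab.ne]) with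
    hlt | hlt
  · exact ⟨b, a, ⟨hlt, hxa, hxb⟩, by simp [hab.le]⟩
  · exact ⟨a, b, ⟨hlt, hxb, hxa⟩, by simp [hab.le]⟩

theorem card_meetingPairs_le {p : ℕ} (hxy : ∀ i, x i ≤ y i)
    (h : ∀ T : Finset ι, (∀ i ∈ T, ∀ j ∈ T, x i ≤ y j ∧ x j ≤ y i) → T.card ≤ p) :
    #(univ.filter fun q : ι × ι => q.1 < q.2 ∧ x q.1 ≤ y q.2 ∧ x q.2 ≤ y q.1) ≤
      Fintype.card ι * (p - 1) :=
  calc _ ≤ #(univ.biUnion fun v => (leftNeighbors x y v).image fun u => (min u v, max u v)) :=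
        card_le_card meetingPairs_subset_biUnion_leftNeighbors
    _ ≤ ∑ v, #((leftNeighbors x y v).image fun u => (min u v, max u v)) := card_biUnion_le
    _ ≤ ∑ v, #(leftNeighbors x y v) := sum_le_sum fun _ _ => card_image_le
    _ ≤ ∑ _v : ι, (p - 1) := sum_le_sum fun v _ => card_leftNeighbors_le hxy h v
    _ = Fintype.card ι * (p - 1) := by simp

end IntervalGraph

theorem interval_graph_edge_bound_general (n p : ℕ)
    (x y : Fin n → ℤ) (hxy : ∀ i, x i ≤ y i)
    (h : ∀ T : Finset (Fin n),
      (∀ i ∈ T, ∀ j ∈ T, x i ≤ y j ∧ x j ≤ y i) → T.card ≤ p) :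
    (Finset.univ.filter (fun q : Fin n × Fin n =>
      q.1 < q.2 ∧ x q.1 ≤ y q.2 ∧ x q.2 ≤ y q.1)).card ≤ n * (p - 1) := by
  simpa using IntervalGraph.card_meetingPairs_le hxy h

/-- Turán-type bound for closed interval graphs: if among `n` closed integer
intervals `[x i, y i]` no `p+1` are pairwise intersecting (`p ≥ 1`), then the
number of unordered pairs of distinct indices whose intervals intersect is at
most `n(p-1)`. -/
theorem interval_graph_edge_bound (n p : ℕ) (hp : 1 ≤ p)
    (x y : Fin n → ℤ) (hxy : ∀ i, x i ≤ y i)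
    (h : ∀ T : Finset (Fin n),
      (∀ i ∈ T, ∀ j ∈ T, x i ≤ y j ∧ x j ≤ y i) → T.card ≤ p) :
    (Finset.univ.filter (fun q : Fin n × Fin n =>
      q.1 < q.2 ∧ x q.1 ≤ y q.2 ∧ x q.2 ≤ y q.1)).card ≤ n * (p - 1) :=
  interval_graph_edge_bound_general n p x y hxy h
end

section
/- If in the minimum DFA A_min of a regular language there exist two distinct states u ≠ v lying on two equally-labeled cycles (i.e., there is a nonempty string γ with δ(u,γ) = u and δ(v,γ) = v) together with strings α ∈ I_u and β ∈ I_v satisfying α ≺ β ≺ γ^ω in co-lex order, then u and v are entangled, meaning there exists an infinite strictly increasing co-lex sequence of strings alternating between I_u and I_v. -/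
/-- Co-lexicographic order on finite strings: compare last characters first. -/
def StrColex {α : Type*} [LinearOrder α] (a b : List α) : Prop :=
  List.Lex (· < ·) a.reverse b.reverse

/-- Extension of a DFA transition function to strings. -/
def run {Q A : Type*} (δ : Q → A → Q) (q : Q) (w : List A) : Q :=
  w.foldl δ q

/- Auxiliary lemmas -/

lemma lex_append_left_aux {A : Type*} (r : A → A → Prop) (p x y : List A)
    (h : List.Lex r x y) : List.Lex r (p ++ x) (p ++ y) := by
  induction p with
  | nil => simpa using h
  | cons a p ih => exact List.Lex.cons ih

lemma lex_of_agree_lt_length_aux {A : Type*} (r : A → A → Prop) :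
    ∀ (x y : List A), x.length < y.length →
      (∀ j < x.length, x[j]? = y[j]?) → List.Lex r x y := by
  intro x
  induction x with
  | nil =>
    intro y hy _
    cases y with
    | nil => simp at hy
    | cons b t => exact List.Lex.nil
  | cons a x ih =>
    intro y hy hag
    cases y with
    | nil => simp at hy
    | cons b t =>
      have h0 := hag 0 (by simp)
      simp at h0
      subst h0
      refine List.Lex.cons (ih t (by simpa using hy) ?_)
      intro j hj
      have := hag (j + 1) (by simpa using Nat.succ_lt_succ hj)
      simpa using this

lemma lex_of_lt_at_aux {A : Type*} [LinearOrder A] :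
    ∀ (i : ℕ) (x y : List A) (c d : A),
      (∀ j < i, x[j]? = y[j]?) → x[i]? = some c → y[i]? = some d → c < d →
      List.Lex (· < ·) x y := by
  intro i
  induction i with
  | zero =>
    intro x y c d _ hx hy hcd
    cases x with
    | nil => simp at hx
    | cons a x =>
      cases y with
      | nil => simp at hy
      | cons b y =>
        simp at hx hy
        subst hx; subst hy
        exact List.Lex.rel hcd
  | succ i ih =>
    intro x y c d hag hx hy hcd
    cases x with
    | nil => simp at hx
    | cons a x =>
      cases y with
      | nil => simp at hy
      | cons b y =>
        have h0 := hag 0 (Nat.succ_pos _)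
        simp at h0
        subst h0
        refine List.Lex.cons (ih x y c d ?_ (by simpa using hx) (by simpa using hy) hcd)
        intro j hj
        have := hag (j + 1) (Nat.succ_lt_succ hj)
        simpa using this

/-- If distinct states `u ≠ v` lie on two equally-labeled cycles (a nonempty `γ`
with `δ(u,γ) = u` and `δ(v,γ) = v`) and there are `α ∈ I_u`, `β ∈ I_v` with
`α ≺ β ≺ γ^ω`, then `u` and `v` are entangled: there is an infinite strictly
increasing co-lex sequence alternating between `I_u` and `I_v`. -/
theorem entangled_of_matching_cycles {Q A : Type*} [LinearOrder A]
    (δ : Q → A → Q) (s u v : Q) (γ α β : List A) (f : ℕ → A)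
    (huv : u ≠ v) (hγ : γ ≠ [])
    (hcu : run δ u γ = u) (hcv : run δ v γ = v)
    (hα : run δ s α = u) (hβ : run δ s β = v)
    (hf : ∀ i, γ.reverse[i % γ.length]? = some (f i))
    (hαβ : StrColex α β) (hβω : ColexOmega β f) :
    ∃ a b : ℕ → List A,
      (∀ i, run δ s (a i) = u) ∧ (∀ i, run δ s (b i) = v) ∧
      (∀ i, StrColex (a i) (b i) ∧ StrColex (b i) (a (i + 1))) := by
  have hL : 0 < γ.length := List.length_pos_iff.mpr hγ
  set L := γ.length with hLdef
  -- powers of γ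
  set gp : ℕ → List A := fun n => (List.replicate n γ).flatten with hgp
  have gp_succ : ∀ n, gp (n + 1) = γ ++ gp n := by
    intro n; simp [hgp, List.replicate_succ]
  have run_gp : ∀ (q : Q), run δ q γ = q → ∀ n, run δ q (gp n) = q := by
    intro q hq n
    induction n with
    | zero => simp [hgp, run]
    | succ n ih =>
      rw [gp_succ]
      show (γ ++ gp n).foldl δ q = q
      rw [List.foldl_append]
      have : γ.foldl δ q = q := hq
      rw [this]; exact ih
  have run_append : ∀ (x w : List A), run δ s (x ++ w) = run δ (run δ s x) w := by
    intro x w; simp [run, List.foldl_append]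
  -- reverse of gp n
  have gp_rev : ∀ n, (gp n).reverse = (List.replicate n γ.reverse).flatten := by
    intro n
    induction n with
    | zero => simp [hgp]
    | succ n ih =>
      rw [gp_succ, List.reverse_append, ih]
      rw [List.replicate_succ']
      simp
  have rep_len : ∀ n, ((List.replicate n γ.reverse).flatten).length = n * L := by
    intro n
    induction n with
    | zero => simp
    | succ n ih =>
      rw [List.replicate_succ, List.flatten_cons, List.length_append, ih,
        List.length_reverse, Nat.succ_mul]
      omega
  -- repeated reverse agrees with f
  have rep_agree : ∀ (n j : ℕ), j < n * L →
      (List.replicate n γ.reverse).flatten[j]? = some (f j) := by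
    intro n
    induction n with
    | zero => intro j hj; simp at hj
    | succ n ih =>
      intro j hj
      rw [List.replicate_succ, List.flatten_cons]
      rw [Nat.succ_mul] at hj
      by_cases hjL : j < L
      · rw [List.getElem?_append_left (by rw [List.length_reverse]; exact hjL)]
        have := hf j
        rwa [Nat.mod_eq_of_lt hjL] at this
      · push_neg at hjL
        rw [List.getElem?_append_right (by rw [List.length_reverse]; exact hjL)]
        have hlen : γ.reverse.length = L := by rw [List.length_reverse]
        rw [hlen]
        have hjL' : j - L < n * L := by omega
        have := ih (j - L) hjL'
        rw [this]
        -- f (j - L) = f j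
        have h1 := hf (j - L)
        have h2 := hf j
        have hmod : (j - L) % L = j % L := by
          conv_rhs => rw [show j = (j - L) + L by omega]
          rw [Nat.add_mod_right]
        rw [hmod, h2] at h1
        rw [Option.some_inj.mp h1]
  -- key: β ≺ α ++ γ^m for m with m * L > β.length
  have key : ∀ m, β.length < m * L → StrColex β (α ++ gp m) := by
    intro m hm
    unfold StrColex
    rw [List.reverse_append, gp_rev]
    rcases hβω with hpre | ⟨i, hi, hag, c, hc, hcf⟩
    · refine lex_of_agree_lt_length_aux _ _ _ ?_ ?_
      · rw [List.length_append, List.length_reverse, rep_len m]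
        omega
      · intro j hj
        rw [List.length_reverse] at hj
        rw [hpre j hj]
        rw [List.getElem?_append_left (by rw [rep_len m]; omega)]
        exact (rep_agree m j (by omega)).symm
    · refine lex_of_lt_at_aux i _ _ c (f i) ?_ hc ?_ hcf
      · intro j hj
        rw [hag j hj]
        rw [List.getElem?_append_left (by rw [rep_len m]; omega)]
        exact (rep_agree m j (by omega)).symm
      · rw [List.getElem?_append_left (by rw [rep_len m]; omega)]
        exact rep_agree m i (by omega)
  -- choose m
  set m : ℕ := β.length + 1 with hm
  have hmL : β.length < m * L := by
    have : m ≤ m * L := Nat.le_mul_of_pos_right m hL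
    omega
  -- colex append on the right
  have colex_app : ∀ (x y w : List A), StrColex x y → StrColex (x ++ w) (y ++ w) := by
    intro x y w h
    unfold StrColex at *
    rw [List.reverse_append, List.reverse_append]
    exact lex_append_left_aux _ _ _ _ h
  -- gp additivity
  have gp_add : ∀ p q, gp (p + q) = gp p ++ gp q := by
    intro p q
    induction p with
    | zero => simp [hgp]
    | succ p ih =>
      rw [show p + 1 + q = (p + q) + 1 by omega, gp_succ, gp_succ, ih, List.append_assoc]
  refine ⟨fun i => α ++ gp (m * i), fun i => β ++ gp (m * i), ?_, ?_, ?_⟩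
  · intro i
    rw [run_append, hα, run_gp u hcu]
  · intro i
    rw [run_append, hβ, run_gp v hcv]
  · intro i
    constructor
    · exact colex_app _ _ _ hαβ
    · have h1 : StrColex β (α ++ gp m) := key m hmL
      have h2 : StrColex (β ++ gp (m * i)) ((α ++ gp m) ++ gp (m * i)) :=
        colex_app _ _ _ h1
      have h3 : (α ++ gp m) ++ gp (m * i) = α ++ gp (m * (i + 1)) := by
        rw [List.append_assoc, ← gp_add]
        congr 1
        ring_nf
      rwa [h3] at h2
end

section
/- In a DFA, if every pair (u_1^i, v_1^j) of a-predecessors of states u_0 and v_0 respectively is non-entangled, then u_0 and v_0 are not entangled via sequences of strings all ending in a. Precisely: if for every monotone co-lex increasing sequence μ_1 ≺ μ_2 ≺ ... contained in I_{u_1^i} ∪ I_{v_1^j} there is an N such that the tail lies entirely in one of the two sets (for every pair i,j), then every monotone increasing sequence of strings ending in character a and contained in I_{u_0} ∪ I_{v_0} has a tail entirely contained in I_{u_0} or entirely in I_{v_0}. -/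
/-- Co-lexicographic order on finite strings: compare last characters first. -/
def ListColex {α : Type*} [LinearOrder α] (a b : List α) : Prop :=
  List.Lex (· < ·) a.reverse b.reverse

private theorem lex_trans' {α : Type*} [LinearOrder α] :
    ∀ {x y z : List α}, List.Lex (· < ·) x y → List.Lex (· < ·) y z →
      List.Lex (· < ·) x z
  | _, _, _, .nil, .rel _ => .nil
  | _, _, _, .nil, .cons _ => .nil
  | _, _, _, .rel h, .rel h' => .rel (lt_trans h h')
  | _, _, _, .rel h, .cons _ => .rel h
  | _, _, _, .cons _, .rel h' => .rel h'
  | _, _, _, .cons h, .cons h' => .cons (lex_trans' h h')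

private theorem colex_trans {α : Type*} [LinearOrder α] {x y z : List α}
    (h : ListColex x y) (h' : ListColex y z) : ListColex x z := lex_trans' h h'

private theorem colex_of_lt {α : Type*} [LinearOrder α] {μ : ℕ → List α}
    (h : ∀ i, ListColex (μ i) (μ (i + 1))) : ∀ {i j}, i < j → ListColex (μ i) (μ j) := by
  intro i j hij
  induction j with
  | zero => omega
  | succ n ih =>
    rcases Nat.lt_succ_iff_lt_or_eq.1 hij with h' | rfl
    · exact colex_trans (ih h') (h n)
    · exact h i

private theorem colex_append_singleton {α : Type*} [LinearOrder α] {x y : List α} {a : α}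
    (h : ListColex (x ++ [a]) (y ++ [a])) : ListColex x y := by
  unfold ListColex at *
  rw [List.reverse_append, List.reverse_append] at h
  simp only [List.reverse_singleton, List.singleton_append] at h
  cases h with
  | rel h => exact absurd h (lt_irrefl a)
  | cons h => exact h

private theorem infinite_fiber {S : Set ℕ} {Q : Type*} [Finite Q] (hS : S.Infinite)
    (f : ℕ → Q) : ∃ w, {i | i ∈ S ∧ f i = w}.Infinite := by
  haveI : Infinite ↥S := hS.to_subtype
  obtain ⟨w, hw⟩ := Finite.exists_infinite_fiber (fun i : S => f i)
  refine ⟨w, ?_⟩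
  rw [Set.infinite_coe_iff] at hw
  have : Subtype.val '' ((fun i : S => f i) ⁻¹' {w}) ⊆ {i | i ∈ S ∧ f i = w} := by
    rintro i ⟨⟨j, hj⟩, hj', rfl⟩
    exact ⟨hj, hj'⟩
  exact ((hw.image (Set.injOn_of_injective Subtype.val_injective)).mono this)

/-- If every pair `(w, w')` of `a`-predecessors of `u₀` and `v₀` respectively is
non-entangled (every monotone co-lex sequence in `I_w ∪ I_{w'}` has a tail in
just one of the two sets), then every monotone increasing sequence of strings
ending in `a` and contained in `I_{u₀} ∪ I_{v₀}` has a tail entirely in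
`I_{u₀}` or entirely in `I_{v₀}`. -/
theorem not_entangled_of_predecessors {Q A : Type*} [Fintype Q] [LinearOrder A]
    (δ : Q → A → Q) (s : Q) (a : A) (u₀ v₀ : Q)
    (hpred : ∀ w w' : Q, δ w a = u₀ → δ w' a = v₀ →
      ∀ μ : ℕ → List A, (∀ i, ListColex (μ i) (μ (i + 1))) →
        (∀ i, run δ s (μ i) = w ∨ run δ s (μ i) = w') →
        ∃ N, (∀ i ≥ N, run δ s (μ i) = w) ∨ (∀ i ≥ N, run δ s (μ i) = w')) :
    ∀ μ : ℕ → List A, (∀ i, ListColex (μ i) (μ (i + 1))) →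
      (∀ i, ∃ ν : List A, μ i = ν ++ [a]) →
      (∀ i, run δ s (μ i) = u₀ ∨ run δ s (μ i) = v₀) →
      ∃ N, (∀ i ≥ N, run δ s (μ i) = u₀) ∨ (∀ i ≥ N, run δ s (μ i) = v₀) := by
  intro μ hmono hend hmem
  by_cases huv : u₀ = v₀
  · exact ⟨0, Or.inl fun i _ => (hmem i).elim id (fun h => h.trans huv.symm)⟩
  by_contra hcon
  push_neg at hcon
  -- Both fibers are unbounded hence infinite
  have hU : {i | run δ s (μ i) = u₀}.Infinite := by
    apply Set.infinite_of_forall_exists_gt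
    intro N
    obtain ⟨i, hiN, hi⟩ := (hcon (N + 1)).2
    exact ⟨i, (hmem i).resolve_right hi, by omega⟩
  have hV : {i | run δ s (μ i) = v₀}.Infinite := by
    apply Set.infinite_of_forall_exists_gt
    intro N
    obtain ⟨i, hiN, hi⟩ := (hcon (N + 1)).1
    exact ⟨i, (hmem i).resolve_left hi, by omega⟩
  -- the predecessor strings and states
  set ν : ℕ → List A := fun i => (hend i).choose with hν
  have hνa : ∀ i, μ i = ν i ++ [a] := fun i => (hend i).choose_spec
  set st : ℕ → Q := fun i => run δ s (ν i) with hst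
  have hrun : ∀ i, run δ s (μ i) = δ (st i) a := by
    intro i
    rw [hνa i]
    simp [run, List.foldl_append, hst]
  obtain ⟨w, hw⟩ := infinite_fiber hU st
  obtain ⟨w', hw'⟩ := infinite_fiber hV st
  obtain ⟨i₀, hi₀U, hi₀⟩ := hw.nonempty
  obtain ⟨j₀, hj₀V, hj₀⟩ := hw'.nonempty
  have hwa : δ w a = u₀ := by rw [← hi₀]; rw [← hrun i₀]; exact hi₀U
  have hw'a : δ w' a = v₀ := by rw [← hj₀]; rw [← hrun j₀]; exact hj₀V
  have hww' : w ≠ w' := fun h => huv (by rw [← hwa, h, hw'a])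
  -- the subsequence of indices whose state is w or w'
  set p : ℕ → Prop := fun i => st i = w ∨ st i = w' with hp
  have hpinf : (setOf p).Infinite := by
    apply hw.mono
    rintro i ⟨-, hi⟩
    exact Or.inl hi
  have hp'inf := hpinf
  set f : ℕ → ℕ := Nat.nth p with hf
  have hfmono : StrictMono f := Nat.nth_strictMono hpinf
  have hfmem : ∀ k, p (f k) := Nat.nth_mem_of_infinite hpinf
  -- apply the hypothesis to the subsequence
  obtain ⟨N, hN⟩ := hpred w w' hwa hw'a (fun k => ν (f k))
    (fun k => colex_append_singleton
      (by rw [← hνa, ← hνa]; exact colex_of_lt hmono (hfmono (Nat.lt_succ_self k))))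
    (fun k => hfmem k)
  -- derive a contradiction in either case
  cases hN with
  | inl h =>
    -- all states in the tail are w, but w' occurs infinitely often
    obtain ⟨i, hiT, hilt⟩ := hw'.exists_gt (f N)
    have hip : p i := Or.inr hiT.2
    obtain ⟨k, hk⟩ : ∃ k, f k = i := by
      have := Nat.range_nth_of_infinite hpinf
      have : i ∈ Set.range (Nat.nth p) := by rw [this]; exact hip
      exact this
    have hkN : k ≥ N := by
      by_contra hlt
      have := hfmono (show k < N by omega)
      omega
    have := h k hkN
    rw [show run δ s (ν (f k)) = st (f k) from rfl, hk] at this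
    exact hww' (this.symm.trans hiT.2)
  | inr h =>
    obtain ⟨i, hiT, hilt⟩ := hw.exists_gt (f N)
    have hip : p i := Or.inl hiT.2
    obtain ⟨k, hk⟩ : ∃ k, f k = i := by
      have := Nat.range_nth_of_infinite hpinf
      have : i ∈ Set.range (Nat.nth p) := by rw [this]; exact hip
      exact this
    have hkN : k ≥ N := by
      by_contra hlt
      have := hfmono (show k < N by omega)
      omega
    have := h k hkN
    rw [show run δ s (ν (f k)) = st (f k) from rfl, hk] at this
    exact hww' (hiT.2.symm.trans this)
end

section
/- A DFA whose reversal is deterministic is minimal: if a DFA A (with all states reachable from the source and all states co-reachable to a final state) has the property that no state has two incoming transitions with the same label and there is a unique final state with no two states mapping to it ambiguously in reverse, then distinct states of A have distinct right languages, i.e., for u ≠ v there exists a string w with exactly one of δ(u,w) ∈ F, δ(v,w) ∈ F. -/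
/-- Extension of a partial DFA transition function to strings. -/
def runP {Q A : Type*} (δ : Q → A → Option Q) (q : Q) (w : List A) : Option Q :=
  List.foldlM δ q w

section RunP

variable {Q A : Type*} (δ : Q → A → Option Q)

def ReverseDeterministic : Prop :=
  ∀ p p' : Q, ∀ a : A, ∀ q : Q, δ p a = some q → δ p' a = some q → p = p'

@[simp]
lemma runP_nil (q : Q) : runP δ q [] = some q := rfl

@[simp]
lemma runP_cons (q : Q) (a : A) (w : List A) :
    runP δ q (a :: w) = (δ q a).bind fun q' => runP δ q' w := rfl

variable {δ}

lemma ReverseDeterministic.eq_of_runP_eq_some (hrev : ReverseDeterministic δ) {u v r : Q}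
    {w : List A} (hu : runP δ u w = some r) (hv : runP δ v w = some r) : u = v := by
  induction w generalizing u v with
  | nil => simp_all
  | cons a w ih =>
    simp only [runP_cons, Option.bind_eq_some_iff] at hu hv
    obtain ⟨u', hu', hu'r⟩ := hu
    obtain ⟨v', hv', hv'r⟩ := hv
    obtain rfl : u' = v' := ih hu'r hv'r
    exact hrev u v a u' hu' hv'

end RunP

theorem reverse_deterministic_minimal_general {Q A : Type*}
    (δ : Q → A → Option Q) (t : Q)
    (hrev : ∀ p p' : Q, ∀ a : A, ∀ q : Q,
      δ p a = some q → δ p' a = some q → p = p')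
    (hco : ∀ q : Q, ∃ w : List A, runP δ q w = some t) :
    ∀ u v : Q, u ≠ v →
      ∃ w : List A, Xor' (runP δ u w = some t) (runP δ v w = some t) := by
  intro u v huv
  obtain ⟨w, hw⟩ := hco u
  exact ⟨w, Or.inl ⟨hw, fun hv => huv (ReverseDeterministic.eq_of_runP_eq_some hrev hw hv)⟩⟩

/-- A DFA whose reversal is deterministic is minimal: if no state has two
incoming transitions with the same label, there is a unique final state `t`,
every state is reachable from the source and can reach `t`, then distinct
states have distinct right languages: for `u ≠ v` there is a string `w` such
that exactly one of `δ(u,w) ∈ F`, `δ(v,w) ∈ F` holds. -/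
theorem reverse_deterministic_minimal {Q A : Type*}
    (δ : Q → A → Option Q) (s t : Q)
    (hrev : ∀ p p' : Q, ∀ a : A, ∀ q : Q,
      δ p a = some q → δ p' a = some q → p = p')
    (hreach : ∀ q : Q, ∃ w : List A, runP δ s w = some q)
    (hco : ∀ q : Q, ∃ w : List A, runP δ q w = some t) :
    ∀ u v : Q, u ≠ v →
      ∃ w : List A, Xor' (runP δ u w = some t) (runP δ v w = some t) :=
  reverse_deterministic_minimal_general δ t hrev hco
end
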